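/- arXiv:1407.2071 — 4 statements merged into one kernel-verified Lean document; each statement's English description precedes it below -/
import Mathlib

section
/- With the su(2) basis above and α ∈ (0, π/2), the operator (Ad_{x_α}+1)/(Ad_{x_α}−1) restricted to g_α^⊥ is the zero transformation, where x_α = [[i sin α, cos α],[−cos α, −i sin α]] ∈ SU(2); equivalently, (Ad_{x_α} + 1) vanishes on g_α^⊥ = Span{tan(α)·e₁ − e₂, e₃}. -/
/-!
`x_α = cos α • e₁ + sin α • e₂` is a unit vector of `su(2) ≅ Im ℍ`, so `x_α² = -1` and
`x_αᴴ = -x_α`; hence `Ad_{x_α} v = -x_α v x_α` equals `-v` exactly when `v` anticommutes with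
`x_α`. On `span{e₁, e₂}` the anticommutator is the Clifford form `uv + vu = -2⟨u, v⟩`, and
`⟨x_α, tan α • e₁ - e₂⟩ = cos α tan α - sin α = 0` since `cos α ≠ 0`; `e₃` anticommutes with
both `e₁` and `e₂`.
-/

open Matrix Complex Real

noncomputable def su2e1 : Matrix (Fin 2) (Fin 2) ℂ := !![0, I; I, 0]
noncomputable def su2e2 : Matrix (Fin 2) (Fin 2) ℂ := !![I, 0; 0, -I]
noncomputable def su2e3 : Matrix (Fin 2) (Fin 2) ℂ := !![0, 1; -1, 0]

/-- The point of the conjugacy class `C ≅ S²` corresponding to `(sin α, 0, cos α)` under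
`(x,y,z) ↔ [[ix, y+iz],[−y+iz, −ix]]`; an element of `SU(2)`, so `Ad_{x_α} u = x_α u x_αᴴ`. -/
noncomputable def su2xα (α : ℝ) : Matrix (Fin 2) (Fin 2) ℂ :=
  !![I * (Real.sin α : ℂ), I * (Real.cos α : ℂ);
     I * (Real.cos α : ℂ), -(I * (Real.sin α : ℂ))]

section Anticommuting

variable {R : Type*} [Ring R]

theorem mul_mul_neg_eq_neg_of_anticomm {x v : R} (hx : x * x = -1) (hxv : x * v + v * x = 0) :
    x * v * -x = -v := by
  have hxv' : x * v = -(v * x) := eq_neg_of_add_eq_zero_left hxv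
  rw [mul_neg, hxv', neg_mul, mul_assoc, hx, mul_neg_one, neg_neg]

variable {K : Type*} [CommRing K] [Algebra K R] {a b : R}

theorem smul_add_smul_mul_self (ha : a * a = -1) (hb : b * b = -1) (hab : a * b + b * a = 0)
    (p q : K) : (p • a + q • b) * (p • a + q • b) = -(p ^ 2 + q ^ 2) • (1 : R) := by
  simp only [add_mul, mul_add, smul_mul_smul_comm, ha, hb, eq_neg_of_add_eq_zero_right hab]
  module

theorem smul_add_smul_anticomm (ha : a * a = -1) (hb : b * b = -1) (hab : a * b + b * a = 0)
    (p q r t : K) :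
    (p • a + q • b) * (r • a + t • b) + (r • a + t • b) * (p • a + q • b)
      = -(2 * (p * r + q * t)) • (1 : R) := by
  simp only [add_mul, mul_add, smul_mul_smul_comm, ha, hb, eq_neg_of_add_eq_zero_right hab]
  module

theorem smul_add_smul_anticomm_of_anticomm {e : R} (hae : a * e + e * a = 0)
    (hbe : b * e + e * b = 0) (p q : K) :
    (p • a + q • b) * e + e * (p • a + q • b) = 0 := by
  simp only [add_mul, mul_add, smul_mul_assoc, mul_smul_comm, eq_neg_of_add_eq_zero_right hae,
    eq_neg_of_add_eq_zero_right hbe]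
  module

end Anticommuting

theorem su2e1_mul_self : su2e1 * su2e1 = -1 := by
  simp [su2e1, Matrix.one_fin_two]

theorem su2e2_mul_self : su2e2 * su2e2 = -1 := by
  simp [su2e2, Matrix.one_fin_two]

theorem su2e1_anticomm_su2e2 : su2e1 * su2e2 + su2e2 * su2e1 = 0 := by
  ext i j; fin_cases i <;> fin_cases j <;> simp [su2e1, su2e2]

theorem su2e1_anticomm_su2e3 : su2e1 * su2e3 + su2e3 * su2e1 = 0 := by
  ext i j; fin_cases i <;> fin_cases j <;> simp [su2e1, su2e3]

theorem su2e2_anticomm_su2e3 : su2e2 * su2e3 + su2e3 * su2e2 = 0 := by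
  ext i j; fin_cases i <;> fin_cases j <;> simp [su2e2, su2e3]

theorem su2xα_eq_cos_smul_add_sin_smul (α : ℝ) :
    su2xα α = Real.cos α • su2e1 + Real.sin α • su2e2 := by
  ext i j; fin_cases i <;> fin_cases j <;> simp [su2xα, su2e1, su2e2, mul_comm]

theorem conjTranspose_su2xα (α : ℝ) : (su2xα α)ᴴ = -su2xα α := by
  ext i j; fin_cases i <;> fin_cases j <;>
    simp [su2xα, -Complex.ofReal_sin, -Complex.ofReal_cos, Complex.conj_ofReal]

theorem su2xα_mul_self (α : ℝ) : su2xα α * su2xα α = -1 := by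
  rw [su2xα_eq_cos_smul_add_sin_smul,
    smul_add_smul_mul_self su2e1_mul_self su2e2_mul_self su2e1_anticomm_su2e2,
    Real.cos_sq_add_sin_sq, neg_smul, one_smul]

/-- `Ad_{x_α} + 1` vanishes on `g_α^⊥ = Span{tan(α)·e₁ − e₂, e₃}`; i.e. the
operator `(Ad_{x_α}+1)/(Ad_{x_α}−1)` restricted to `g_α^⊥` is zero. -/
theorem su2_ad_plus_one_vanishes_on_orthocomplement (α : ℝ)
    (hα : α ∈ Set.Ioo 0 (π/2)) :
    su2xα α * (Real.tan α • su2e1 - su2e2) * (su2xα α)ᴴ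
        = -(Real.tan α • su2e1 - su2e2)
      ∧ su2xα α * su2e3 * (su2xα α)ᴴ = -su2e3 := by
  have hcos : Real.cos α ≠ 0 := (cos_pos_of_mem_Ioo ⟨by linarith [hα.1, pi_pos], hα.2⟩).ne'
  rw [conjTranspose_su2xα]
  refine ⟨mul_mul_neg_eq_neg_of_anticomm (su2xα_mul_self α) ?_,
    mul_mul_neg_eq_neg_of_anticomm (su2xα_mul_self α) ?_⟩
  · rw [su2xα_eq_cos_smul_add_sin_smul, sub_eq_add_neg, ← neg_one_smul ℝ su2e2,
      smul_add_smul_anticomm su2e1_mul_self su2e2_mul_self su2e1_anticomm_su2e2,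
      Real.tan_eq_sin_div_cos, mul_div_cancel₀ _ hcos]
    simp
  · rw [su2xα_eq_cos_smul_add_sin_smul]
    exact smul_add_smul_anticomm_of_anticomm su2e1_anticomm_su2e3 su2e2_anticomm_su2e3 _ _
end

section
/- Let M, N be smooth G-manifolds with infinitesimal action maps ρ_M : g → Γ(TM), ρ_N : g → Γ(TN), and let {e_a} be an orthonormal basis of the quadratic Lie algebra g. Then for any two functions f, g ∈ C^∞(M × N) invariant under the diagonal G-action, the bivector Φ = Σ_a ρ_M(e_a) ∧ ρ_N(e_a) satisfies Φ(df, dg) = 0. -/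
/-- For infinitesimal actions `ρ_M(e_a) = X a`, `ρ_N(e_a) = Y a` on the two
factors of `M × N` (modelled as derivations of the function algebra `A` of the product),
the fusion bivector `Φ = Σ_a ρ_M(e_a) ∧ ρ_N(e_a)` annihilates pairs of diagonal
`G`-invariant functions: `Φ(df, dg) = Σ_a (X_a f · Y_a g − X_a g · Y_a f) = 0`. -/
theorem fusion_term_vanishes_on_invariant_functions
    {A : Type*} [CommRing A] [Algebra ℝ A] {n : ℕ}
    (X Y : Fin n → Derivation ℝ A A) (f g : A)
    (hf : ∀ a, X a f + Y a f = 0) (hg : ∀ a, X a g + Y a g = 0) :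
    ∑ a, (X a f * Y a g - X a g * Y a f) = 0 := by
  refine Finset.sum_eq_zero fun a _ => ?_
  have h1 : X a f = -Y a f := eq_neg_of_add_eq_zero_left (hf a)
  have h2 : X a g = -Y a g := eq_neg_of_add_eq_zero_left (hg a)
  rw [h1, h2]; ring
end

section
/- Let g ∈ G with quadratic Lie algebra g. As bivector fields on the conjugacy class C through g, Σ_a R_a ∧ L_a = ½ Σ_{a,b} ((Ad_g+1)/(Ad_g−1)|_{g_g^⊥})_{ab} X_a ∧ X_b at the point g, where X_a = L_a − R_a and the operator (Ad_g+1)/(Ad_g−1)|_{g_g^⊥} is ((Ad_g+1)∘(Ad_g−1)^{-1}) composed with the orthogonal projection onto g_g^⊥. -/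
/-!
Write `C = A - 1` and `K = 1 - Pr`, the projection onto `ker C` along its `B`-orthogonal.
Expanding in the orthonormal basis, `Σ_{a,b} B(e_a, Bop e_b) C e_a ∧ C e_b = Σ_b C (Bop e_b) ∧ C e_b`,
and with `p_b = Pr e_b` this is `Σ_b (A + 1) p_b ∧ (A - 1) p_b = 2 Σ_b p_b ∧ A p_b`.
On the other side `e_b ∧ A e_b = p_b ∧ A p_b + K e_b ∧ C e_b`, and
`Σ_b K e_b ∧ C e_b = Σ_b e_b ∧ C K e_b = 0` because `K` is `B`-self-adjoint and `C K = 0`.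
-/

namespace ExteriorAlgebra

variable {R M : Type*} [CommRing R] [AddCommGroup M] [Module R M]

theorem ι_mul_ι_anticomm (u v : M) : ι R u * ι R v = -(ι R v * ι R u) :=
  eq_neg_of_add_eq_zero_left (ι_add_mul_swap u v)

theorem ι_add_mul_ι_sub (u v : M) : ι R (u + v) * ι R (u - v) = (2 : R) • (ι R v * ι R u) := by
  simp only [map_add, map_sub, add_mul, mul_sub, ι_sq_zero, ι_mul_ι_anticomm u v, two_smul]
  abel

theorem ι_add_mul_ι_add_same (p q k : M) :
    ι R (p + k) * ι R (q + k) = ι R p * ι R q + ι R k * ι R (q - p) := by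
  simp only [map_add, map_sub, add_mul, mul_add, mul_sub, ι_sq_zero, ι_mul_ι_anticomm p k]
  abel

end ExteriorAlgebra

namespace LinearMap.BilinForm

open ExteriorAlgebra

variable {R M κ : Type*} [CommRing R] [AddCommGroup M] [Module R M] [Fintype κ] [DecidableEq κ]
  {B : LinearMap.BilinForm R M} {e : Module.Basis κ R M}

theorem apply_basis_eq_repr (horth : ∀ a b, B (e a) (e b) = if a = b then 1 else 0)
    (a : κ) (x : M) : B (e a) x = e.repr x a := by
  conv_lhs => rw [← e.sum_repr x]
  simp only [map_sum, map_smul, horth, smul_eq_mul, mul_ite, mul_one, mul_zero,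
    Finset.sum_ite_eq, Finset.mem_univ, if_true]

theorem sum_apply_basis_smul_map {N : Type*} [AddCommGroup N] [Module R N]
    (horth : ∀ a b, B (e a) (e b) = if a = b then 1 else 0) (f : M →ₗ[R] N) (x : M) :
    ∑ a, B (e a) x • f (e a) = f x := by
  simp only [apply_basis_eq_repr horth, ← map_smul, ← map_sum, e.sum_repr]

theorem sum_sum_apply_smul_mul {A : Type*} [Ring A] [Algebra R A]
    (horth : ∀ a b, B (e a) (e b) = if a = b then 1 else 0)
    (F : M → M) (f : M →ₗ[R] A) (z : κ → A) :
    ∑ a, ∑ b, B (e a) (F (e b)) • (f (e a) * z b) = ∑ b, f (F (e b)) * z b := by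
  rw [Finset.sum_comm]
  refine Finset.sum_congr rfl fun b _ => ?_
  simp only [← smul_mul_assoc, ← Finset.sum_mul, sum_apply_basis_smul_map horth]

theorem sum_ι_map_mul_ι_of_selfAdjoint
    (horth : ∀ a b, B (e a) (e b) = if a = b then 1 else 0)
    (T S : M →ₗ[R] M) (hT : ∀ x y, B x (T y) = B y (T x)) :
    ∑ b, ι R (T (e b)) * ι R (S (e b)) = ∑ b, ι R (e b) * ι R (S (T (e b))) := by
  rw [← sum_sum_apply_smul_mul horth T (ι R)]
  refine Finset.sum_congr rfl fun a _ => ?_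
  simp only [hT (e a), ← mul_smul_comm, ← Finset.mul_sum]
  exact congrArg _ (sum_apply_basis_smul_map horth (ι R ∘ₗ S) _)

theorem apply_sub_comm_of_isOrtho (hB : B.IsSymm) (P : M →ₗ[R] M)
    (hP : ∀ x y, B (y - P y) (P x) = 0) (x y : M) : B x (y - P y) = B y (x - P x) := by
  have hsplit : ∀ x y, B x (y - P y) = B (x - P x) (y - P y) := fun x y => by
    conv_lhs => rw [← sub_add_cancel x (P x)]
    rw [map_add, LinearMap.add_apply, hB.eq (P x), hP, add_zero]
  rw [hsplit, hsplit y, hB.eq]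

end LinearMap.BilinForm

section ConjugacyClass

open ExteriorAlgebra LinearMap.BilinForm

variable {R M κ : Type*} [CommRing R] [AddCommGroup M] [Module R M] [Fintype κ] [DecidableEq κ]
  {B : LinearMap.BilinForm R M} {e : Module.Basis κ R M} {A Pr : M →ₗ[R] M}

theorem map_proj_sub_proj (hPr : ∀ x, A (x - Pr x) = x - Pr x) (x : M) :
    A (Pr x) - Pr x = A x - x := by
  have h := sub_eq_zero.mpr (hPr x)
  rw [← sub_eq_zero, ← neg_eq_zero, ← h, map_sub]
  abel

theorem sum_ι_basis_mul_ι_map_eq_sum_proj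
    (horth : ∀ a b, B (e a) (e b) = if a = b then 1 else 0)
    (hK : ∀ x y, B x (y - Pr y) = B y (x - Pr x)) (hPr : ∀ x, A (x - Pr x) = x - Pr x) :
    ∑ b, ι R (e b) * ι R (A (e b)) = ∑ b, ι R (Pr (e b)) * ι R (A (Pr (e b))) := by
  have hterm (x : M) :
      ι R x * ι R (A x) = ι R (Pr x) * ι R (A (Pr x)) + ι R (x - Pr x) * ι R (A x - x) := by
    have hAx : A x = A (Pr x) + (x - Pr x) := by rw [← hPr x, ← map_add, add_sub_cancel]
    rw [← map_proj_sub_proj hPr, ← ι_add_mul_ι_add_same, hAx, add_sub_cancel]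
  have hker : ∑ b, ι R (e b - Pr (e b)) * ι R (A (e b) - e b) = 0 := by
    have h := sum_ι_map_mul_ι_of_selfAdjoint horth (LinearMap.id - Pr) (A - LinearMap.id) hK
    simpa only [LinearMap.sub_apply, LinearMap.id_apply, hPr, sub_self, map_zero, mul_zero,
      Finset.sum_const_zero] using h
  rw [Finset.sum_congr rfl fun b _ => hterm (e b), Finset.sum_add_distrib, hker, add_zero]

theorem sum_sum_smul_ι_mul_ι_eq_two_smul_sum_proj {Bop : M →ₗ[R] M}
    (horth : ∀ a b, B (e a) (e b) = if a = b then 1 else 0)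
    (hPr : ∀ x, A (x - Pr x) = x - Pr x) (hBop : ∀ x, A (Bop x) - Bop x = A (Pr x) + Pr x) :
    ∑ a, ∑ b, B (e a) (Bop (e b)) • (ι R (A (e a) - e a) * ι R (A (e b) - e b))
      = (2 : R) • ∑ b, ι R (Pr (e b)) * ι R (A (Pr (e b))) := by
  calc _ = ∑ b, ι R (A (Bop (e b)) - Bop (e b)) * ι R (A (e b) - e b) :=
        sum_sum_apply_smul_mul horth Bop (ι R ∘ₗ (A - LinearMap.id)) _
    _ = ∑ b, (2 : R) • (ι R (Pr (e b)) * ι R (A (Pr (e b)))) := by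
        refine Finset.sum_congr rfl fun b _ => ?_
        rw [hBop, ← map_proj_sub_proj hPr, ι_add_mul_ι_sub]
    _ = _ := Finset.smul_sum.symm

end ConjugacyClass

theorem conjugacy_class_bivector_identity_general
    {L : Type*} [LieRing L] [LieAlgebra ℝ L] {n : ℕ}
    (B : LinearMap.BilinForm ℝ L) (hBsymm : B.IsSymm)
    (e : Module.Basis (Fin n) ℝ L)
    (horth : ∀ a b, B (e a) (e b) = if a = b then 1 else 0)
    (A : L ≃ₗ[ℝ] L)
    (Pr : L →ₗ[ℝ] L)
    (hPr1 : ∀ x : L, Pr x ∈ B.orthogonal (LinearMap.ker (A.toLinearMap - LinearMap.id)))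
    (hPr2 : ∀ x : L, A (x - Pr x) = x - Pr x)
    (Bop : L →ₗ[ℝ] L)
    (hBop : ∀ x : L, A (Bop x) - Bop x = A (Pr x) + Pr x) :
    ∑ a, ExteriorAlgebra.ι ℝ (e a) * ExteriorAlgebra.ι ℝ (A (e a))
      = (1/2 : ℝ) • ∑ a, ∑ b, (B (e a) (Bop (e b))) •
          (ExteriorAlgebra.ι ℝ (A (e a) - e a) * ExteriorAlgebra.ι ℝ (A (e b) - e b)) := by
  have hK : ∀ x y, B x (y - Pr y) = B y (x - Pr x) :=
    LinearMap.BilinForm.apply_sub_comm_of_isOrtho hBsymm Pr fun x y => hPr1 x _ (by simp [hPr2])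
  have hLHS : ∑ a, ExteriorAlgebra.ι ℝ (e a) * ExteriorAlgebra.ι ℝ (A (e a))
      = ∑ b, ExteriorAlgebra.ι ℝ (Pr (e b)) * ExteriorAlgebra.ι ℝ (A (Pr (e b))) :=
    sum_ι_basis_mul_ι_map_eq_sum_proj (A := A.toLinearMap) horth hK hPr2
  have hRHS : ∑ a, ∑ b, B (e a) (Bop (e b)) •
        (ExteriorAlgebra.ι ℝ (A (e a) - e a) * ExteriorAlgebra.ι ℝ (A (e b) - e b))
      = (2 : ℝ) • ∑ b, ExteriorAlgebra.ι ℝ (Pr (e b)) * ExteriorAlgebra.ι ℝ (A (Pr (e b))) :=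
    sum_sum_smul_ι_mul_ι_eq_two_smul_sum_proj (A := A.toLinearMap) horth hPr2 hBop
  rw [hLHS, hRHS, smul_smul]
  norm_num

/-- For `g ∈ G` with quadratic Lie algebra `(L, B)` and `A = Ad_g` (a Lie
algebra automorphism preserving `B`), the right-trivialized identity of bivectors on the
conjugacy class through `g` holds in `Λ²L`:
`Σ_a e_a ∧ A e_a = ½ Σ_{a,b} ((Ad_g+1)/(Ad_g−1)|_{g_g^⊥})_{ab} (A−1)e_a ∧ (A−1)e_b`,
where `X_a = L_a − R_a` trivializes to `(A−1)e_a` and `L_a` to `A e_a`.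

`Pr` is the projection of `L` onto `W = (ker(A−1))^⊥` along `ker(A−1)`, and `Bop` is
`((Ad_g+1)∘(Ad_g−1)^{-1})∘Pr`, characterized by `(A−1)(Bop x) = (A+1)(Pr x)` with values
in `W`; its matrix entries in the orthonormal basis are `B (e a) (Bop (e b))`. -/
theorem conjugacy_class_bivector_identity
    {L : Type*} [LieRing L] [LieAlgebra ℝ L] {n : ℕ}
    (B : LinearMap.BilinForm ℝ L) (hBsymm : B.IsSymm) (hBnd : B.Nondegenerate)
    (hBinv : ∀ x y z : L, B ⁅x, y⁆ z = B x ⁅y, z⁆)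
    (e : Module.Basis (Fin n) ℝ L)
    (horth : ∀ a b, B (e a) (e b) = if a = b then 1 else 0)
    (A : L ≃ₗ[ℝ] L) (hAlie : ∀ x y : L, A ⁅x, y⁆ = ⁅A x, A y⁆)
    (hAorth : ∀ x y : L, B (A x) (A y) = B x y)
    (Pr : L →ₗ[ℝ] L)
    (hPr1 : ∀ x : L, Pr x ∈ B.orthogonal (LinearMap.ker (A.toLinearMap - LinearMap.id)))
    (hPr2 : ∀ x : L, A (x - Pr x) = x - Pr x)
    (Bop : L →ₗ[ℝ] L)
    (hBopW : ∀ x : L, Bop x ∈ B.orthogonal (LinearMap.ker (A.toLinearMap - LinearMap.id)))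
    (hBop : ∀ x : L, A (Bop x) - Bop x = A (Pr x) + Pr x) :
    ∑ a, ExteriorAlgebra.ι ℝ (e a) * ExteriorAlgebra.ι ℝ (A (e a))
      = (1/2 : ℝ) • ∑ a, ∑ b, (B (e a) (Bop (e b))) •
          (ExteriorAlgebra.ι ℝ (A (e a) - e a) * ExteriorAlgebra.ι ℝ (A (e b) - e b)) :=
  conjugacy_class_bivector_identity_general B hBsymm e horth A Pr hPr1 hPr2 Bop hBop
end

section
/- Let A be a linear orthogonal operator on a finite-dimensional inner product space V such that A − 1 is invertible. Then with B = (A+1)(A−1)^{-1}, the identity Σ_a e_a ∧ A e_a = ½ Σ_{a,b} B_{ab} (A−1)e_a ∧ (A−1)e_b holds in Λ²V for any orthonormal basis {e_a}, where B_{ab} = ⟨e_a, B e_b⟩. -/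
open scoped RealInnerProductSpace

/-- For an orthogonal operator `A` on a finite-dimensional real inner
product space with `A − 1` invertible, and `B = (A+1)(A−1)^{-1}`, in `Λ²V`:
`Σ_a e_a ∧ A e_a = ½ Σ_{a,b} B_{ab} (A−1)e_a ∧ (A−1)e_b`
for any orthonormal basis `{e_a}`, with `B_{ab} = ⟨e_a, B e_b⟩`. -/
theorem cayley_bivector_identity
    {V : Type*} [NormedAddCommGroup V] [InnerProductSpace ℝ V]
    [FiniteDimensional ℝ V] {n : ℕ}
    (e : OrthonormalBasis (Fin n) ℝ V)
    (A : V →ₗ[ℝ] V) (hA : ∀ x y : V, ⟪A x, A y⟫ = ⟪x, y⟫)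
    (hbij : Function.Bijective (A - (LinearMap.id : V →ₗ[ℝ] V)))
    (Bop : V →ₗ[ℝ] V)
    (hBop : Bop.comp (A - LinearMap.id) = A + LinearMap.id) :
    ∑ a, ExteriorAlgebra.ι ℝ (e a) * ExteriorAlgebra.ι ℝ (A (e a))
      = (1/2 : ℝ) • ∑ a, ∑ b, ⟪e a, Bop (e b)⟫ •
          (ExteriorAlgebra.ι ℝ (A (e a) - e a) * ExteriorAlgebra.ι ℝ (A (e b) - e b)) := by
  set C : V →ₗ[ℝ] V := A - LinearMap.id with hC
  -- C and Bop "commute": C (Bop x) = A x + x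
  have key : ∀ x : V, C (Bop x) = A x + x := by
    intro x
    obtain ⟨y, rfl⟩ := hbij.2 x
    have h1 : Bop (C y) = A y + y := by
      have := congrArg (fun f : V →ₗ[ℝ] V => f y) hBop
      simpa using this
    have : C (A y + y) = A (C y) + C y := by
      simp only [hC, LinearMap.sub_apply, LinearMap.id_apply, map_add, map_sub]
    rw [h1, this]
  -- for each b, sum over a collapses
  have hrow : ∀ b, ∑ a, ⟪e a, Bop (e b)⟫ •
      (ExteriorAlgebra.ι ℝ (A (e a) - e a) * ExteriorAlgebra.ι ℝ (A (e b) - e b))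
      = ExteriorAlgebra.ι ℝ (A (e b) + e b) * ExteriorAlgebra.ι ℝ (A (e b) - e b) := by
    intro b
    have hsum : ∑ a, ⟪e a, Bop (e b)⟫ • (A (e a) - e a) = A (e b) + e b := by
      have : ∑ a, ⟪e a, Bop (e b)⟫ • (A (e a) - e a)
          = C (∑ a, ⟪e a, Bop (e b)⟫ • e a) := by
        rw [map_sum]
        refine Finset.sum_congr rfl fun a _ => ?_
        simp [hC, LinearMap.sub_apply]
      rw [this, e.sum_repr' (Bop (e b)), key]
    calc ∑ a, ⟪e a, Bop (e b)⟫ •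
        (ExteriorAlgebra.ι ℝ (A (e a) - e a) * ExteriorAlgebra.ι ℝ (A (e b) - e b))
        = (∑ a, ⟪e a, Bop (e b)⟫ • ExteriorAlgebra.ι ℝ (A (e a) - e a))
            * ExteriorAlgebra.ι ℝ (A (e b) - e b) := by
          rw [Finset.sum_mul]
          simp [smul_mul_assoc]
      _ = ExteriorAlgebra.ι ℝ (∑ a, ⟪e a, Bop (e b)⟫ • (A (e a) - e a))
            * ExteriorAlgebra.ι ℝ (A (e b) - e b) := by
          rw [map_sum]
          simp
      _ = _ := by rw [hsum]
  have hexp : ∀ x y : V, ExteriorAlgebra.ι ℝ (x + y) * ExteriorAlgebra.ι ℝ (x - y)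
      = (2 : ℝ) • (ExteriorAlgebra.ι ℝ y * ExteriorAlgebra.ι ℝ x) := by
    intro x y
    have hanti : ExteriorAlgebra.ι ℝ x * ExteriorAlgebra.ι ℝ y
        = - (ExteriorAlgebra.ι ℝ y * ExteriorAlgebra.ι ℝ x) := by
      exact eq_neg_of_add_eq_zero_left (ExteriorAlgebra.ι_add_mul_swap (R := ℝ) x y)
    rw [map_add, map_sub, add_mul, mul_sub, mul_sub,
      ExteriorAlgebra.ι_sq_zero, ExteriorAlgebra.ι_sq_zero, hanti]
    module
  rw [Finset.sum_comm]
  simp only [hrow]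
  calc ∑ a, ExteriorAlgebra.ι ℝ (e a) * ExteriorAlgebra.ι ℝ (A (e a))
      = (1/2 : ℝ) • ∑ b, (2:ℝ) • (ExteriorAlgebra.ι ℝ (e b) * ExteriorAlgebra.ι ℝ (A (e b))) := by
        rw [Finset.smul_sum]
        refine Finset.sum_congr rfl fun b _ => ?_
        rw [smul_smul]
        norm_num
    _ = _ := by
        refine congrArg _ (Finset.sum_congr rfl fun b _ => ?_)
        rw [hexp]
end
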